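/- Let M > 8π and β ∈ ℝ. Then the attractive free energy F⁻_β is not bounded from below on the set of admissible functions f on ℝ² with ∫_{ℝ²} f dx = M: for every C ∈ ℝ there exists an admissible f with ∫_{ℝ²} f dx = M and F⁻_β[f] < C. -/

import Mathlib

open MeasureTheory Real Filter

noncomputable section

/-- The Euclidean plane ℝ². -/
abbrev E2 := EuclideanSpace ℝ (Fin 2)

/-- The probability density μ(x) = 1/(π (1+|x|²)²) on ℝ². -/
def mu2 (x : E2) : ℝ := 1 / (π * (1 + ‖x‖ ^ 2) ^ 2)

/-- The external potential V(x) = −log μ(x) = 2 log(1+|x|²) + log π. -/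
def Vpot (x : E2) : ℝ := 2 * Real.log (1 + ‖x‖ ^ 2) + Real.log π

/-- A function f on ℝ² is admissible if it is measurable, nonnegative a.e., integrable,
and ∫ f |log f|, ∫ V f and ∬ f(x) f(y) |log|x−y|| are all finite. -/
def Admissible (f : E2 → ℝ) : Prop :=
  Measurable f ∧ (∀ᵐ x : E2, 0 ≤ f x) ∧ Integrable f ∧
  Integrable (fun x => f x * |Real.log (f x)|) ∧
  Integrable (fun x => Vpot x * f x) ∧
  Integrable (fun p : E2 × E2 => f p.1 * f p.2 * |Real.log ‖p.1 - p.2‖|)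

/-- The repulsive free energy F⁺_β. -/
def Fplus (β : ℝ) (f : E2 → ℝ) : ℝ :=
  (∫ x, f x * Real.log (f x)) + β * (∫ x, Vpot x * f x)
    - (1 / (4 * π)) * ∫ p : E2 × E2, f p.1 * f p.2 * Real.log ‖p.1 - p.2‖

/-- The attractive free energy F⁻_β. -/
def Fminus (β : ℝ) (f : E2 → ℝ) : ℝ :=
  (∫ x, f x * Real.log (f x)) + β * (∫ x, Vpot x * f x)
    + (1 / (4 * π)) * ∫ p : E2 × E2, f p.1 * f p.2 * Real.log ‖p.1 - p.2‖

/-!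
Spread the mass `M` uniformly over a disc of radius `R` and let `R → 0`. The entropy is
`M log M - M log π - 2 M log R`, the potential stays bounded on the disc, and since
`|x - y| < 2R` on the support the interaction term is at most `(M² / 4π) log 2R`. Hence
`F⁻_β ≤ const + (M² / 4π - 2M) log R`, which tends to `-∞` because `M > 8π`.
-/
open Set Metric Function Topology

lemma ae_prod_fst_ne_snd {α : Type*} [MeasurableSpace α] [MeasurableEq α] {μ ν : Measure α}
    [SFinite ν] [NullSingletonClass ν] : ∀ᵐ p ∂μ.prod ν, p.1 ≠ p.2 :=
  (Measure.ae_prod_iff_ae_ae measurableSet_diagonal.compl).2 <|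
    ae_of_all _ fun x => (ν.ae_ne x).mono fun _ hy => hy.symm

lemma integrableOn_ball_log_norm {E : Type*} [NormedAddCommGroup E] [NormedSpace ℝ E]
    [MeasurableSpace E] [BorelSpace E] [FiniteDimensional ℝ E] [Nontrivial E]
    (μ : Measure E) [μ.IsAddHaarMeasure] (r : ℝ) :
    IntegrableOn (fun x : E => Real.log ‖x‖) (ball 0 r) μ := by
  rw [integrableOn_fun_norm_addHaar μ (f := Real.log)]
  have h := intervalIntegral.intervalIntegrable_log'.continuousOn_mul
    (a := 0) (b := r) (μ := volume) (continuous_pow (Module.finrank ℝ E - 1)).continuousOn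
  exact h.1.mono_set Ioo_subset_Ioc_self

lemma norm_sub_lt_of_mem_support {G : Type*} [NormedAddCommGroup G] {f : G → ℝ} {R : ℝ}
    (hfR : support f ⊆ ball 0 R) {x y : G} (hx : f x ≠ 0) (hy : f y ≠ 0) : ‖x - y‖ < 2 * R := by
  have hx' := mem_ball_zero_iff.1 (hfR hx)
  have hy' := mem_ball_zero_iff.1 (hfR hy)
  linarith [norm_sub_le x y]

section SupportedInBall

variable {G : Type*} [NormedAddCommGroup G] [MeasurableSpace G] {μ : Measure G} [SFinite μ]
  {f : G → ℝ} {R : ℝ}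

lemma MeasureTheory.Integrable.mul_mul_comp_sub_of_support_subset_ball [BorelSpace G]
    [MeasurableAdd₂ G] [MeasurableNeg G] [μ.IsAddRightInvariant] {k : G → ℝ} {a : ℝ}
    (hf : Integrable f μ) (hfa : ∀ x, |f x| ≤ a) (hfR : support f ⊆ ball 0 R)
    (hk : IntegrableOn k (ball 0 (2 * R)) μ) :
    Integrable (fun p : G × G => f p.1 * f p.2 * k (p.1 - p.2)) (μ.prod μ) := by
  set K := (ball (0 : G) (2 * R)).indicator k
  have hK : Integrable K μ := (integrable_indicator_iff measurableSet_ball).2 hk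
  have hconv : Integrable (fun p : G × G => f p.2 * K (p.1 - p.2)) (μ.prod μ) := by
    simpa using hf.convolution_integrand (ContinuousLinearMap.mul ℝ ℝ) hK
  -- `‖p.1 - p.2‖ < 2R` wherever `f p.1 * f p.2 ≠ 0`, so truncating `k` to that ball is harmless.
  have hcut : (fun p : G × G => f p.1 * f p.2 * k (p.1 - p.2))
      = fun p => f p.1 * (f p.2 * K (p.1 - p.2)) := by
    ext p
    by_cases h1 : f p.1 = 0
    · simp [h1]
    by_cases h2 : f p.2 = 0
    · simp [h2]
    rw [show K (p.1 - p.2) = k (p.1 - p.2) from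
      indicator_of_mem (mem_ball_zero_iff.2 (norm_sub_lt_of_mem_support hfR h1 h2)) _, mul_assoc]
  rw [hcut]
  exact hconv.bdd_mul hf.1.comp_fst (ae_of_all _ fun p => hfa p.1)

lemma integral_mul_mul_log_norm_sub_le [MeasurableEq G] [NullSingletonClass μ]
    (hf : Integrable f μ) (hf0 : 0 ≤ f) (hfR : support f ⊆ ball 0 R)
    (hint : Integrable (fun p : G × G => f p.1 * f p.2 * Real.log ‖p.1 - p.2‖) (μ.prod μ)) :
    ∫ p, f p.1 * f p.2 * Real.log ‖p.1 - p.2‖ ∂μ.prod μ ≤ (∫ x, f x ∂μ) ^ 2 * Real.log (2 * R) := by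
  rw [sq, ← integral_prod_mul, ← integral_mul_const]
  refine integral_mono_ae hint ((hf.mul_prod hf).mul_const _) ?_
  filter_upwards [ae_prod_fst_ne_snd] with p hp
  by_cases h1 : f p.1 = 0
  · simp [h1]
  by_cases h2 : f p.2 = 0
  · simp [h2]
  have hpos : 0 < ‖p.1 - p.2‖ := norm_pos_iff.2 (sub_ne_zero.2 hp)
  exact mul_le_mul_of_nonneg_left
    (Real.log_le_log hpos (norm_sub_lt_of_mem_support hfR h1 h2).le)
    (mul_nonneg (hf0 _) (hf0 _))

end SupportedInBall

lemma measureReal_ball_zero_E2 {R : ℝ} (hR : 0 ≤ R) :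
    volume.real (ball (0 : E2) R) = π * R ^ 2 := by
  rw [measureReal_def, EuclideanSpace.volume_ball_fin_two, ← ENNReal.ofReal_pow hR,
    ← ENNReal.ofReal_mul (by positivity), ENNReal.toReal_ofReal (by positivity), mul_comm]

lemma integrable_indicator_ball_const (R c : ℝ) :
    Integrable ((ball (0 : E2) R).indicator fun _ => c) :=
  (integrableOn_const measure_ball_lt_top.ne).integrable_indicator measurableSet_ball

lemma integral_indicator_ball_const {R : ℝ} (hR : 0 ≤ R) (c : ℝ) :
    ∫ x, (ball (0 : E2) R).indicator (fun _ => c) x = π * R ^ 2 * c := by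
  rw [integral_indicator_const c measurableSet_ball, measureReal_ball_zero_E2 hR, smul_eq_mul]

lemma Vpot_nonneg (x : E2) : 0 ≤ Vpot x := by
  have h1 : 0 ≤ Real.log (1 + ‖x‖ ^ 2) := Real.log_nonneg (by nlinarith [sq_nonneg ‖x‖])
  have h2 : 0 ≤ Real.log π := Real.log_nonneg (by linarith [Real.pi_gt_three])
  unfold Vpot; linarith

lemma Vpot_le_of_norm_le_one {x : E2} (hx : ‖x‖ ≤ 1) : Vpot x ≤ 2 * Real.log 2 + Real.log π := by
  have : Real.log (1 + ‖x‖ ^ 2) ≤ Real.log 2 :=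
    Real.log_le_log (by positivity) (by nlinarith [norm_nonneg x])
  unfold Vpot; linarith

def ballDensity (M R : ℝ) : E2 → ℝ := (ball 0 R).indicator fun _ => M / (π * R ^ 2)

section BallDensity

variable {M R : ℝ}

lemma ballDensity_nonneg (hM : 0 ≤ M) : 0 ≤ ballDensity M R :=
  fun _ => indicator_nonneg (fun _ _ => by positivity) _

lemma integral_ballDensity (hR : 0 < R) : ∫ x, ballDensity M R x = M := by
  rw [ballDensity, integral_indicator_ball_const hR.le]
  field_simp

lemma integrable_ballDensity : Integrable (ballDensity M R) :=
  integrable_indicator_ball_const R _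

lemma integrable_ballDensity_mul_mul_comp_sub {k : E2 → ℝ} (hk : IntegrableOn k (ball 0 (2 * R))) :
    Integrable fun p : E2 × E2 => ballDensity M R p.1 * ballDensity M R p.2 * k (p.1 - p.2) :=
  integrable_ballDensity.mul_mul_comp_sub_of_support_subset_ball
    (fun x => norm_indicator_le_norm_self (fun _ => M / (π * R ^ 2)) x) support_indicator_subset hk

lemma ballDensity_comp_eq_indicator {φ : ℝ → ℝ} (hφ : φ 0 = 0) :
    (fun x => φ (ballDensity M R x)) = (ball 0 R).indicator fun _ => φ (M / (π * R ^ 2)) :=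
  (indicator_comp_of_zero hφ).symm

lemma integral_ballDensity_mul_log (hR : 0 < R) :
    ∫ x, ballDensity M R x * Real.log (ballDensity M R x) = M * Real.log (M / (π * R ^ 2)) := by
  rw [ballDensity_comp_eq_indicator (φ := fun t => t * Real.log t) (by simp),
    integral_indicator_ball_const hR.le]
  field_simp

lemma abs_Vpot_mul_ballDensity_le (hM : 0 ≤ M) (hR : R ≤ 1) (x : E2) :
    |Vpot x * ballDensity M R x| ≤ (2 * Real.log 2 + Real.log π) * ballDensity M R x := by
  by_cases hx : x ∈ ball 0 R
  · have hxR : ‖x‖ ≤ 1 := (mem_ball_zero_iff.1 hx).le.trans hR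
    rw [abs_of_nonneg (mul_nonneg (Vpot_nonneg x) (ballDensity_nonneg hM x))]
    exact mul_le_mul_of_nonneg_right (Vpot_le_of_norm_le_one hxR) (ballDensity_nonneg hM x)
  · simp [ballDensity, hx]

lemma admissible_ballDensity (hM : 0 ≤ M) (hR1 : R ≤ 1) :
    Admissible (ballDensity M R) := by
  have hmeas : Measurable (ballDensity M R) := measurable_const.indicator measurableSet_ball
  refine ⟨hmeas, ae_of_all _ (ballDensity_nonneg hM), integrable_ballDensity, ?_, ?_,
    integrable_ballDensity_mul_mul_comp_sub (integrableOn_ball_log_norm volume _).abs⟩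
  · rw [ballDensity_comp_eq_indicator (φ := fun t => t * |Real.log t|) (by simp)]
    exact integrable_indicator_ball_const R _
  · exact (integrable_ballDensity.const_mul (2 * Real.log 2 + Real.log π)).mono'
      ((by unfold Vpot; fun_prop : Measurable Vpot).mul hmeas).aestronglyMeasurable
      (ae_of_all _ (abs_Vpot_mul_ballDensity_le hM hR1))

lemma abs_integral_Vpot_mul_ballDensity_le (hM : 0 ≤ M) (hR : 0 < R) (hR1 : R ≤ 1) :
    |∫ x, Vpot x * ballDensity M R x| ≤ M * (2 * Real.log 2 + Real.log π) := by
  calc |∫ x, Vpot x * ballDensity M R x| = ‖∫ x, Vpot x * ballDensity M R x‖ := rfl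
    _ ≤ ∫ x, (2 * Real.log 2 + Real.log π) * ballDensity M R x :=
        norm_integral_le_of_norm_le (integrable_ballDensity.const_mul _)
          (ae_of_all _ (abs_Vpot_mul_ballDensity_le hM hR1))
    _ = M * (2 * Real.log 2 + Real.log π) := by
        rw [integral_const_mul, integral_ballDensity hR, mul_comm]

lemma Fminus_ballDensity_le (β : ℝ) (hM : 0 < M) (hR : 0 < R) (hR2 : R ≤ 1 / 2) :
    Fminus β (ballDensity M R) ≤ M * Real.log (M / π) + |β| * (M * (2 * Real.log 2 + Real.log π))
      + M ^ 2 / (4 * π) * Real.log 2 + (M ^ 2 / (4 * π) - 2 * M) * Real.log R := by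
  have hentropy : ∫ x, ballDensity M R x * Real.log (ballDensity M R x)
      = M * Real.log (M / π) - 2 * M * Real.log R := by
    rw [integral_ballDensity_mul_log hR, ← div_div, Real.log_div (by positivity) (by positivity),
      Real.log_pow]
    push_cast; ring
  have hpotential : β * ∫ x, Vpot x * ballDensity M R x
      ≤ |β| * (M * (2 * Real.log 2 + Real.log π)) := by
    calc β * ∫ x, Vpot x * ballDensity M R x ≤ |β| * |∫ x, Vpot x * ballDensity M R x| := by
          rw [← abs_mul]; exact le_abs_self _
      _ ≤ _ := mul_le_mul_of_nonneg_left
          (abs_integral_Vpot_mul_ballDensity_le hM.le hR (by linarith)) (abs_nonneg β)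
  have hinteraction : (1 / (4 * π)) * ∫ p : E2 × E2, ballDensity M R p.1 * ballDensity M R p.2 *
      Real.log ‖p.1 - p.2‖ ≤ (1 / (4 * π)) * (M ^ 2 * Real.log (2 * R)) := by
    refine mul_le_mul_of_nonneg_left ?_ (by positivity)
    have h := integral_mul_mul_log_norm_sub_le (R := R) integrable_ballDensity
      (ballDensity_nonneg hM.le) support_indicator_subset
      (integrable_ballDensity_mul_mul_comp_sub (integrableOn_ball_log_norm volume _))
    rwa [integral_ballDensity hR] at h
  rw [Real.log_mul two_ne_zero hR.ne'] at hinteraction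
  unfold Fminus
  rw [hentropy]
  have hsplit : 1 / (4 * π) * (M ^ 2 * (Real.log 2 + Real.log R))
      = M ^ 2 / (4 * π) * Real.log 2 + M ^ 2 / (4 * π) * Real.log R := by ring
  linarith

end BallDensity

/-- For M > 8π the attractive free energy F⁻_β is not bounded from below. -/
theorem Fminus_unbounded_below (M β : ℝ) (hM : 8 * π < M) :
    ∀ C : ℝ, ∃ f : E2 → ℝ, Admissible f ∧ (∫ x, f x) = M ∧ Fminus β f < C := by
  intro C
  have hM0 : 0 < M := by linarith [Real.pi_pos]
  have hc : 0 < M ^ 2 / (4 * π) - 2 * M := by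
    rw [sub_pos, lt_div_iff₀ (by positivity)]
    nlinarith
  have hbound : Tendsto (fun R => M * Real.log (M / π)
      + |β| * (M * (2 * Real.log 2 + Real.log π)) + M ^ 2 / (4 * π) * Real.log 2
      + (M ^ 2 / (4 * π) - 2 * M) * Real.log R) (𝓝[>] 0) atBot :=
    tendsto_atBot_add_const_left _ _ (Real.tendsto_log_nhdsGT_zero.const_mul_atBot hc)
  obtain ⟨R, hRC, hR0, hR2⟩ := ((hbound.eventually (eventually_lt_atBot C)).and
    (Ioo_mem_nhdsGT (by norm_num : (0 : ℝ) < 1 / 2))).exists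
  exact ⟨ballDensity M R, admissible_ballDensity hM0.le (by linarith),
    integral_ballDensity hR0, (Fminus_ballDensity_le β hM0 hR0 hR2.le).trans_lt hRC⟩
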